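/- Lozanovskii factorization: for every unconditional convex body L in ℝⁿ (compact, convex, with nonempty interior, symmetric under all coordinate sign changes), there exists an invertible diagonal linear operator T on ℝⁿ such that T(B∞ⁿ) ⊆ L ⊆ n·T(B₁ⁿ). -/

import Mathlib

/-!
Let `d` maximize `∏ xᵢ` over the nonnegative part of `L`; it exists by compactness and has
positive coordinates because `L` contains a small positive multiple of `(1, …, 1)`.
The cube `[-1, 1]ⁿ` is the convex hull of the sign vectors, so unconditionality and convexity give
`d · [-1, 1]ⁿ ⊆ L`. For `x ∈ L` the point `|x|` again lies in the nonnegative part of `L`, so the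
derivative of `∏ xᵢ` at `d` in the direction `|x| - d` is nonpositive; it equals
`∏ dⱼ · ∑ (|xᵢ| / dᵢ - 1)`, whence `∑ |xᵢ| / dᵢ ≤ n`, i.e. `x ∈ n · d · B₁ⁿ`.
-/

variable {ι : Type*}

def IsUnconditional (L : Set (EuclideanSpace ℝ ι)) : Prop :=
  ∀ x ∈ L, ∀ δ : ι → ℝ, (∀ i, δ i = 1 ∨ δ i = -1) →
    (WithLp.toLp 2 (fun i => δ i * x i) : EuclideanSpace ℝ ι) ∈ L

def nonnegOrthant (ι : Type*) : Set (EuclideanSpace ℝ ι) := {x | ∀ i, 0 ≤ x i}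

theorem isClosed_nonnegOrthant : IsClosed (nonnegOrthant ι) := by
  simp only [nonnegOrthant, Set.ofPred_forall]
  exact isClosed_iInter fun i => isClosed_le continuous_const (by fun_prop)

theorem convex_nonnegOrthant : Convex ℝ (nonnegOrthant ι) := by
  intro x hx y hy a b ha hb _ i
  simp only [PiLp.add_apply, PiLp.smul_apply, smul_eq_mul]
  exact add_nonneg (mul_nonneg ha (hx i)) (mul_nonneg hb (hy i))

variable [Fintype ι] {L : Set (EuclideanSpace ℝ ι)}

theorem IsUnconditional.mul_mem (hL : IsUnconditional L) (hLconvex : Convex ℝ L)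
    {x : EuclideanSpace ℝ ι} (hx : x ∈ L) {y : ι → ℝ} (hy : ∀ i, |y i| ≤ 1) :
    (WithLp.toLp 2 (fun i => x i * y i) : EuclideanSpace ℝ ι) ∈ L := by
  set S : Set (ι → ℝ) := {y | (WithLp.toLp 2 (fun i => x i * y i) : EuclideanSpace ℝ ι) ∈ L}
  have hS : Convex ℝ S := by
    intro y₁ hy₁ y₂ hy₂ a b ha hb hab
    change _ ∈ L
    convert hLconvex hy₁ hy₂ ha hb hab using 1
    ext i
    simp only [PiLp.add_apply, PiLp.smul_apply, Pi.add_apply, Pi.smul_apply, smul_eq_mul]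
    ring
  have hsigns : Set.univ.pi (fun _ => ({-1, 1} : Set ℝ)) ⊆ S := fun δ hδ => by
    simpa only [S, Set.mem_ofPred_eq, mul_comm] using
      hL x hx δ fun i => (hδ i trivial).symm
  have hy_hull : y ∈ convexHull ℝ (Set.univ.pi (fun _ => ({-1, 1} : Set ℝ))) := by
    rw [convexHull_pi]
    intro i _
    rw [convexHull_pair, segment_eq_Icc (by norm_num)]
    exact abs_le.1 (hy i)
  exact hS.convexHull_subset_iff.2 hsigns hy_hull

theorem IsUnconditional.abs_mem (hL : IsUnconditional L) (hLconvex : Convex ℝ L)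
    {x : EuclideanSpace ℝ ι} (hx : x ∈ L) :
    (WithLp.toLp 2 (fun i => |x i|) : EuclideanSpace ℝ ι) ∈ L := by
  simpa only [self_mul_sign] using
    hL.mul_mem hLconvex hx (y := fun i => SignType.sign (x i)) fun i => by
      rcases lt_trichotomy (x i) 0 with h | h | h <;> simp [h]

theorem exists_pos_isMaxOn_prod (hLcompact : IsCompact L)
    (hLint : (0 : EuclideanSpace ℝ ι) ∈ interior L) :
    ∃ d ∈ L ∩ nonnegOrthant ι, (∀ i, 0 < d i) ∧
      IsMaxOn (fun x : EuclideanSpace ℝ ι => ∏ i, x i) (L ∩ nonnegOrthant ι) d := by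
  set one : EuclideanSpace ℝ ι := WithLp.toLp 2 (fun _ => 1)
  obtain ⟨c, hcL, hc⟩ : ∃ c : ℝ, c • one ∈ L ∧ 0 < c := by
    have hsmul : Filter.Tendsto (fun c : ℝ => c • one) (nhds 0) (nhds 0) :=
      (continuous_id.smul continuous_const : Continuous fun c : ℝ => c • one).tendsto' 0 0
        (zero_smul ℝ one)
    exact ((hsmul.eventually (mem_interior_iff_mem_nhds.1 hLint)).filter_mono
      nhdsWithin_le_nhds |>.and self_mem_nhdsWithin).exists (f := nhdsWithin 0 (Set.Ioi 0))
  have hcK : c • one ∈ L ∩ nonnegOrthant ι := ⟨hcL, fun i => by simp [one, hc.le]⟩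
  obtain ⟨d, hdK, hd⟩ := (hLcompact.inter_right isClosed_nonnegOrthant).exists_isMaxOn
    ⟨_, hcK⟩ (f := fun x : EuclideanSpace ℝ ι => ∏ i, x i)
    (continuous_finsetProd _ fun i _ => by fun_prop).continuousOn
  have hprod : 0 < ∏ i, d i :=
    (Finset.prod_pos fun i _ => by simpa [one] using hc).trans_le (hd hcK)
  refine ⟨d, hdK, fun i => (hdK.2 i).lt_of_ne' ?_, hd⟩
  exact Finset.prod_ne_zero_iff.1 hprod.ne' i (Finset.mem_univ i)

theorem sum_div_le_card_of_isMaxOn_prod {K : Set (EuclideanSpace ℝ ι)} (hK : Convex ℝ K)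
    {d a : EuclideanSpace ℝ ι} (hdK : d ∈ K) (hd_pos : ∀ i, 0 < d i)
    (hd : IsMaxOn (fun x : EuclideanSpace ℝ ι => ∏ i, x i) K d) (ha : a ∈ K) :
    ∑ i, a i / d i ≤ Fintype.card ι := by
  classical
  have hderiv : HasFDerivAt (fun x : EuclideanSpace ℝ ι => ∏ i, x i)
      (∑ i, (∏ j ∈ Finset.univ.erase i, d j) • EuclideanSpace.proj (𝕜 := ℝ) i) d := by
    simpa using HasFDerivAt.finsetProd (u := Finset.univ) (x := d)
      (g := fun i => ⇑(EuclideanSpace.proj (𝕜 := ℝ) i))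
      fun i _ => (EuclideanSpace.proj (𝕜 := ℝ) i).hasFDerivAt
  have hnonpos := hd.localize.hasFDerivWithinAt_nonpos hderiv.hasFDerivWithinAt
    (mem_posTangentConeAt_of_segment_subset (y := a - d)
      (by simpa using hK.segment_subset hdK ha))
  have hterm (i : ι) :
      (∏ j ∈ Finset.univ.erase i, d j) * (a i - d i) = (∏ j, d j) * (a i / d i - 1) := by
    rw [← Finset.prod_erase_mul _ _ (Finset.mem_univ i)]
    field_simp [(hd_pos i).ne']
  simp only [sum_apply, smul_apply, PiLp.proj_apply, PiLp.sub_apply, smul_eq_mul] at hnonpos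
  rw [Finset.sum_congr rfl fun i _ => hterm i, ← Finset.mul_sum] at hnonpos
  have := nonpos_of_mul_nonpos_right hnonpos (Finset.prod_pos fun i _ => hd_pos i)
  simpa [Finset.sum_sub_distrib] using this

theorem exists_sum_abs_le_one_of_sum_abs_div_le {n : ℕ} {d x : EuclideanSpace ℝ (Fin n)}
    (hd_pos : ∀ i, 0 < d i) (hx : ∑ i, |x i| / d i ≤ n) :
    ∃ z : EuclideanSpace ℝ (Fin n), ∑ i, |z i| ≤ 1 ∧
      (WithLp.toLp 2 (fun i => (n : ℝ) * (d i * z i)) : EuclideanSpace ℝ (Fin n)) = x := by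
  refine ⟨WithLp.toLp 2 (fun i => x i / (n * d i)), ?_, ?_⟩
  · change ∑ i, |x i / (n * d i)| ≤ 1
    calc ∑ i, |x i / (n * d i)| = (∑ i, |x i| / d i) / n := by
          rw [Finset.sum_div]
          refine Finset.sum_congr rfl fun i _ => ?_
          rw [abs_div, abs_of_nonneg (mul_nonneg n.cast_nonneg (hd_pos i).le), div_div, mul_comm]
      _ ≤ 1 := div_le_one_of_le₀ hx n.cast_nonneg
  · ext i
    have hn : (n : ℝ) ≠ 0 := Nat.cast_ne_zero.2 (Fin.pos i).ne'
    field_simp [hn, (hd_pos i).ne']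

theorem lozanovskii_factorization_general (n : ℕ)
    (L : Set (EuclideanSpace ℝ (Fin n)))
    (hLcompact : IsCompact L) (hLconvex : Convex ℝ L)
    (hLint : (0 : EuclideanSpace ℝ (Fin n)) ∈ interior L)
    (hLuncond : ∀ x ∈ L, ∀ δ : Fin n → ℝ, (∀ i, δ i = 1 ∨ δ i = -1) →
      (WithLp.toLp 2 (fun i => δ i * x i) : EuclideanSpace ℝ (Fin n)) ∈ L) :
    ∃ d : Fin n → ℝ, (∀ i, d i ≠ 0) ∧
      ((fun x : EuclideanSpace ℝ (Fin n) => (WithLp.toLp 2 (fun i => d i * x i) : EuclideanSpace ℝ (Fin n))) ''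
          {x : EuclideanSpace ℝ (Fin n) | ∀ i, |x i| ≤ 1} ⊆ L) ∧
      (L ⊆ (fun x : EuclideanSpace ℝ (Fin n) =>
          (WithLp.toLp 2 (fun i => (n : ℝ) * (d i * x i)) : EuclideanSpace ℝ (Fin n))) ''
          {x : EuclideanSpace ℝ (Fin n) | ∑ i, |x i| ≤ 1}) := by
  have hL : IsUnconditional L := hLuncond
  obtain ⟨d, hdK, hd_pos, hd_max⟩ := exists_pos_isMaxOn_prod hLcompact hLint
  refine ⟨d, fun i => (hd_pos i).ne', ?_, fun x hx => ?_⟩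
  · rintro _ ⟨y, hy, rfl⟩
    exact hL.mul_mem hLconvex hdK.1 hy
  have hsum : ∑ i, |x i| / d i ≤ n := by
    simpa using sum_div_le_card_of_isMaxOn_prod (hLconvex.inter convex_nonnegOrthant) hdK
      hd_pos hd_max ⟨hL.abs_mem hLconvex hx, fun i => abs_nonneg (x i)⟩
  exact exists_sum_abs_le_one_of_sum_abs_div_le hd_pos hsum

theorem lozanovskii_factorization (n : ℕ) (hn : 1 ≤ n)
    (L : Set (EuclideanSpace ℝ (Fin n)))
    (hLcompact : IsCompact L) (hLconvex : Convex ℝ L)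
    (hLint : (0 : EuclideanSpace ℝ (Fin n)) ∈ interior L)
    (hLuncond : ∀ x ∈ L, ∀ δ : Fin n → ℝ, (∀ i, δ i = 1 ∨ δ i = -1) →
      (WithLp.toLp 2 (fun i => δ i * x i) : EuclideanSpace ℝ (Fin n)) ∈ L) :
    ∃ d : Fin n → ℝ, (∀ i, d i ≠ 0) ∧
      ((fun x : EuclideanSpace ℝ (Fin n) => (WithLp.toLp 2 (fun i => d i * x i) : EuclideanSpace ℝ (Fin n))) ''
          {x : EuclideanSpace ℝ (Fin n) | ∀ i, |x i| ≤ 1} ⊆ L) ∧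
      (L ⊆ (fun x : EuclideanSpace ℝ (Fin n) =>
          (WithLp.toLp 2 (fun i => (n : ℝ) * (d i * x i)) : EuclideanSpace ℝ (Fin n))) ''
          {x : EuclideanSpace ℝ (Fin n) | ∑ i, |x i| ≤ 1}) :=
  lozanovskii_factorization_general n L hLcompact hLconvex hLint hLuncond
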